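/- For the state ρ = a|ψ⁺⟩⟨ψ⁺| + (1−a)|11⟩⟨11| with a = 1/2, and for any orthonormal basis {|χ_1⟩, |χ_2⟩} of span{|ψ⁺⟩, |11⟩}, the average concurrence (1/2)(C(|χ_1⟩) + C(|χ_2⟩)) equals 1/2, where the concurrence of a two-qubit pure state |χ⟩ = Σ c_{ij}|ij⟩ is C(|χ⟩) = 2|c_{00}c_{11} − c_{01}c_{10}|. -/

import Mathlib

open Matrix
open scoped ComplexOrder

/-- Rank-one projector |v⟩⟨v|. -/
noncomputable def proj {n : Type*} (v : n → ℂ) : Matrix n n ℂ :=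
  Matrix.vecMulVec v (star v)

/-- Tensor product of vectors. -/
noncomputable def tens {a b : Type*} (v : a → ℂ) (w : b → ℂ) : a × b → ℂ :=
  fun p => v p.1 * w p.2

/-- Hermitian inner product ⟨u|v⟩. -/
noncomputable def inner' {n : Type*} [Fintype n] (u v : n → ℂ) : ℂ :=
  dotProduct (star u) v

/-- Square root of a positive semidefinite matrix, as formerly defined in Mathlib
(`Matrix.PosSemidef.sqrt`, since removed). -/
noncomputable def Matrix.PosSemidef.sqrt {n 𝕜 : Type*} [Fintype n] [DecidableEq n] [RCLike 𝕜]
    {A : Matrix n n 𝕜} (hA : A.PosSemidef) : Matrix n n 𝕜 :=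
  (hA.isHermitian.eigenvectorUnitary : Matrix n n 𝕜) *
    diagonal (fun i => ((Real.sqrt (hA.isHermitian.eigenvalues i) : ℝ) : 𝕜)) *
    (star hA.isHermitian.eigenvectorUnitary : Matrix n n 𝕜)

open Classical in
/-- Uhlmann fidelity Tr √(√ρ σ √ρ) (0 if inputs are not positive semidefinite). -/
noncomputable def fid {n : Type*} [Fintype n] [DecidableEq n]
    (ρ σ : Matrix n n ℂ) : ℝ :=
  if h : ρ.PosSemidef ∧ σ.PosSemidef then
    ((h.2.mul_mul_conjTranspose_same h.1.sqrt).sqrt).trace.re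
  else 0

/-- Partial trace over the second subsystem. -/
noncomputable def ptraceB {a b : Type*} [Fintype b] (M : Matrix (a × b) (a × b) ℂ) : Matrix a a ℂ :=
  fun i j => ∑ k, M (i, k) (j, k)

/-- Partial trace over the first subsystem. -/
noncomputable def ptraceA {a b : Type*} [Fintype a] (M : Matrix (a × b) (a × b) ℂ) : Matrix b b ℂ :=
  fun i j => ∑ k, M (k, i) (k, j)


/-- Standard basis of ℂ². -/
noncomputable def e (i : Fin 2) : Fin 2 → ℂ := fun j => if j = i then 1 else 0

/-- The Bell state |ψ⁺⟩ = (|01⟩ + |10⟩)/√2. -/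
noncomputable def psiPlus : Fin 2 × Fin 2 → ℂ :=
  ((Real.sqrt 2 : ℂ))⁻¹ • (tens (e 0) (e 1) + tens (e 1) (e 0))

/-- Concurrence of a two-qubit pure state written in the standard product basis. -/
noncomputable def concur (χ : Fin 2 × Fin 2 → ℂ) : ℝ :=
  2 * ‖χ (0, 0) * χ (1, 1) - χ (0, 1) * χ (1, 0)‖

/-! A state `a • ψ⁺ + b • |11⟩` has amplitudes `(0, a/√2, a/√2, b)`, hence concurrence `‖a‖²`.
The coefficient matrix `!![a, c; b, d]` of an orthonormal pair in the span is unitary, so its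
first row is a unit vector as well: `‖a‖² + ‖c‖² = 1`. -/

theorem norm_sq_add_norm_sq_eq_one_of_orthonormal_columns {a b c d : ℂ}
    (hab : star a * a + star b * b = 1) (hcd : star c * c + star d * d = 1)
    (horth : star a * c + star b * d = 0) : ‖a‖ ^ 2 + ‖c‖ ^ 2 = 1 := by
  simp only [RCLike.star_def, Complex.conj_mul'] at hab hcd
  have hab' : ‖a‖ ^ 2 + ‖b‖ ^ 2 = 1 := by exact_mod_cast hab
  have hcd' : ‖c‖ ^ 2 + ‖d‖ ^ 2 = 1 := by exact_mod_cast hcd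
  have hnorm : ‖a‖ * ‖c‖ = ‖b‖ * ‖d‖ := by
    simpa using congrArg norm (eq_neg_of_add_eq_zero_left horth)
  linear_combination (congrArg (· ^ 2) hnorm) + (1 - ‖c‖ ^ 2) * hab' + ‖b‖ ^ 2 * hcd'

theorem inner'_add_smul_of_orthonormal {n : Type*} [Fintype n] {u v : n → ℂ}
    (hu : inner' u u = 1) (hv : inner' v v = 1) (huv : inner' u v = 0) (a b c d : ℂ) :
    inner' (a • u + b • v) (c • u + d • v) = star a * c + star b * d := by
  have hvu : inner' v u = 0 := by rw [inner', star_dotProduct, ← inner', huv, star_zero]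
  simp only [inner', star_add, star_smul, add_dotProduct, dotProduct_add, smul_dotProduct,
    dotProduct_smul] at hu hv huv hvu ⊢
  rw [hu, hv, huv, hvu]
  simp only [smul_eq_mul]
  ring

theorem inner'_psiPlus_self : inner' psiPlus psiPlus = 1 := by
  norm_num [inner', psiPlus, tens, e, dotProduct, Fintype.sum_prod_type, ← mul_inv,
    ← Complex.ofReal_mul]

theorem inner'_tens_one_self : inner' (tens (e 1) (e 1)) (tens (e 1) (e 1)) = 1 := by
  simp [inner', tens, e, dotProduct, Fintype.sum_prod_type]

theorem inner'_psiPlus_tens_one : inner' psiPlus (tens (e 1) (e 1)) = 0 := by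
  simp [inner', psiPlus, tens, e, dotProduct, Fintype.sum_prod_type]

theorem concur_smul_psiPlus_add_smul_tens_one (a b : ℂ) :
    concur (a • psiPlus + b • tens (e 1) (e 1)) = ‖a‖ ^ 2 := by
  norm_num [concur, psiPlus, tens, e, mul_mul_mul_comm _ _ a, ← mul_inv, ← Complex.ofReal_mul]
  ring

theorem stmt16 (χ₁ χ₂ : Fin 2 × Fin 2 → ℂ)
    (h11 : inner' χ₁ χ₁ = 1) (h22 : inner' χ₂ χ₂ = 1) (h12 : inner' χ₁ χ₂ = 0)
    (hm1 : χ₁ ∈ Submodule.span ℂ ({psiPlus, tens (e 1) (e 1)} : Set (Fin 2 × Fin 2 → ℂ)))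
    (hm2 : χ₂ ∈ Submodule.span ℂ ({psiPlus, tens (e 1) (e 1)} : Set (Fin 2 × Fin 2 → ℂ))) :
    (concur χ₁ + concur χ₂) / 2 = 1 / 2 := by
  obtain ⟨a, b, rfl⟩ := Submodule.mem_span_pair.mp hm1
  obtain ⟨c, d, rfl⟩ := Submodule.mem_span_pair.mp hm2
  simp only [inner'_add_smul_of_orthonormal inner'_psiPlus_self inner'_tens_one_self
    inner'_psiPlus_tens_one] at h11 h22 h12
  rw [concur_smul_psiPlus_add_smul_tens_one, concur_smul_psiPlus_add_smul_tens_one,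
    norm_sq_add_norm_sq_eq_one_of_orthonormal_columns h11 h22 h12]
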